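/- arXiv:2303.04033 — 2 statements merged into one kernel-verified Lean document; each statement's English description precedes it below -/
import Mathlib

section
/- Let f ∈ ℤ[X] with 0 < |f(a)| < |f(b)| for integers a, b, let k ≥ 1, and let q_k be as defined via admissible divisors. If q_k > 1, f has no rational roots, and every complex root θ of f satisfies |b − θ| > √(q_k)·|a − θ|, then f is a product of at most k irreducible factors over ℚ. -/
/-!
Suppose `f = g₀ ⋯ g_k` over `ℚ` with nonconstant factors. By Gauss's lemma `f = t · P₀ ⋯ P_k`
with `P_i ∈ ℤ[X]` of the same degrees. The ratios `|P_i(b)| / |P_i(a)|` multiply to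
`|f(b)| / |f(a)|`, so one of them, say for `P_j`, is at most `(|f(b)| / |f(a)|)^(1/(k+1))`.
Since `|P_j(a)|` and `|P_j(b)|` are admissible divisors (a common divisor of `P_j(x)` and
`(f / P_j)(x)` divides both `f(x)` and `f'(x)`), this ratio is at most `q`. On the other hand
`P_j` has degree at least `2`, as `f` has no rational roots, and `|P_j(x)| = |lc| ∏ |x - θ|` over
the complex roots `θ` of `P_j` gives `|P_j(b)| > √q ^ deg P_j · |P_j(a)| ≥ q |P_j(a)|`.
-/

open Polynomial Real

noncomputable section

/-- `d` is an admissible divisor of `f(a)`. -/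
def AdmDiv (f : Polynomial ℤ) (a d : ℤ) : Prop :=
  d ∣ f.eval a ∧
    Int.gcd d (f.eval a / d) ∣ Int.gcd (f.eval a) (f.derivative.eval a)

/-- `d` is a unitary divisor of `N`. -/
def UnitDiv (N d : ℤ) : Prop := d ∣ N ∧ Int.gcd d (N / d) = 1

/-- `f` is a product of at most `k` nonconstant irreducible factors over `ℚ`
(counting multiplicities): it cannot be written as a product of `k + 1`
nonconstant polynomials over `ℚ`. -/
def FactorsAtMost (f : Polynomial ℤ) (k : ℕ) : Prop :=
  ∀ g : Fin (k + 1) → Polynomial ℚ, (∀ i, 0 < (g i).natDegree) →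
    f.map (Int.castRingHom ℚ) ≠ ∏ i, g i

/-- `q` is the quantity `q_k` of the paper: the greatest ratio `d₂/d₁` of
admissible divisors of `f(b)` and `f(a)` not exceeding `(|f(b)|/|f(a)|)^(1/(k+1))`. -/
def IsQk (f : Polynomial ℤ) (a b : ℤ) (k : ℕ) (q : ℝ) : Prop :=
  IsGreatest {x : ℝ | ∃ d₁ d₂ : ℤ, AdmDiv f a d₁ ∧ AdmDiv f b d₂ ∧
    x = (d₂ : ℝ) / (d₁ : ℝ) ∧
    x ≤ (|((f.eval b : ℤ) : ℝ)| / |((f.eval a : ℤ) : ℝ)|) ^ ((k + 1 : ℝ))⁻¹} q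

/-- `q` is the quantity `q^u_k` of the paper, defined via unitary divisors. -/
def IsQuk (f : Polynomial ℤ) (a b : ℤ) (k : ℕ) (q : ℝ) : Prop :=
  IsGreatest {x : ℝ | ∃ d₁ d₂ : ℤ, UnitDiv (f.eval a) d₁ ∧ UnitDiv (f.eval b) d₂ ∧
    x = (d₂ : ℝ) / (d₁ : ℝ) ∧
    x ≤ (|((f.eval b : ℤ) : ℝ)| / |((f.eval a : ℤ) : ℝ)|) ^ ((k + 1 : ℝ))⁻¹} q

theorem Finset.exists_le_prod_rpow_inv_card {ι : Type*} {s : Finset ι} (hs : s.Nonempty)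
    {r : ι → ℝ} (hr : ∀ i ∈ s, 0 ≤ r i) :
    ∃ j ∈ s, r j ≤ (∏ i ∈ s, r i) ^ ((s.card : ℝ)⁻¹) := by
  obtain ⟨j, hj, hmin⟩ := s.exists_min_image r hs
  refine ⟨j, hj, ?_⟩
  rw [le_rpow_inv_iff_of_pos (hr j hj) (prod_nonneg hr) (by exact_mod_cast hs.card_pos),
    rpow_natCast, ← prod_const]
  exact prod_le_prod (fun _ _ => hr j hj) hmin

theorem pow_mul_norm_eval_lt_norm_eval {p : ℂ[X]} (hp : 0 < p.natDegree) {c : ℝ} (hc : 0 < c)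
    {x y : ℂ} (hx : p.eval x ≠ 0) (h : ∀ θ ∈ p.roots, c * ‖x - θ‖ < ‖y - θ‖) :
    c ^ p.natDegree * ‖p.eval x‖ < ‖p.eval y‖ := by
  have hp0 : p ≠ 0 := ne_zero_of_natDegree_gt hp
  have hsplit : p.Splits := IsAlgClosed.splits p
  have hnorm (z : ℂ) : ‖p.eval z‖ = ‖p.leadingCoeff‖ * (p.roots.map fun θ => ‖z - θ‖).prod := by
    rw [hsplit.eval_eq_prod_roots, norm_mul]
    congr 1
    simpa [Multiset.map_map] using map_multiset_prod (normHom : ℂ →*₀ ℝ) (p.roots.map (z - ·))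
  have hroots : p.roots ≠ 0 := by
    rw [← Multiset.card_pos, IsAlgClosed.card_roots_eq_natDegree]; exact hp
  have hlt : (p.roots.map fun θ => c * ‖x - θ‖).prod < (p.roots.map fun θ => ‖y - θ‖).prod :=
    Multiset.prod_map_lt_prod_map hroots _ _
      (fun θ hθ => mul_pos hc (norm_pos_iff.mpr (sub_ne_zero.mpr fun hxθ =>
        hx (hxθ ▸ (mem_roots hp0).mp hθ)))) h
  rw [Multiset.prod_map_mul, Multiset.map_const', Multiset.prod_replicate,
    IsAlgClosed.card_roots_eq_natDegree] at hlt
  have hlc : 0 < ‖p.leadingCoeff‖ := norm_pos_iff.mpr (leadingCoeff_ne_zero.mpr hp0)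
  rw [hnorm, hnorm, mul_left_comm]
  gcongr

open scoped nonZeroDivisors in
lemma exists_isPrimitive_map_eq_C_mul {g : ℚ[X]} (hg : g ≠ 0) :
    ∃ P : ℤ[X], P.IsPrimitive ∧ ∃ c : ℚ, c ≠ 0 ∧ P.map (Int.castRingHom ℚ) = C c * g := by
  obtain ⟨b, hb, hN⟩ := IsLocalization.integerNormalization_spec ℤ⁰ g
  set N := IsLocalization.integerNormalization ℤ⁰ g
  have hb0 : (b : ℚ) ≠ 0 := by exact_mod_cast nonZeroDivisors.ne_zero hb
  rw [algebraMap_int_eq, ← Int.cast_smul_eq_zsmul ℚ, smul_eq_C_mul] at hN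
  have hN0 : N ≠ 0 := by
    rintro h
    rw [h, Polynomial.map_zero] at hN
    exact mul_ne_zero (C_ne_zero.mpr hb0) hg hN.symm
  have hcont : (N.content : ℚ) ≠ 0 := by exact_mod_cast content_eq_zero_iff.not.mpr hN0
  refine ⟨N.primPart, isPrimitive_primPart N, b / N.content, div_ne_zero hb0 hcont, ?_⟩
  have hsplit := congrArg (map (Int.castRingHom ℚ)) N.eq_C_content_mul_primPart
  rw [hN, Polynomial.map_mul, map_C, eq_intCast] at hsplit
  rw [div_eq_inv_mul, C_mul, mul_assoc, hsplit, ← mul_assoc, ← C_mul, inv_mul_cancel₀ hcont,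
    C_1, one_mul]

theorem exists_eq_C_mul_prod_of_map_eq_prod {ι : Type*} [Fintype ι] {f : ℤ[X]} {g : ι → ℚ[X]}
    (hg : ∀ i, g i ≠ 0) (hfg : f.map (Int.castRingHom ℚ) = ∏ i, g i) :
    ∃ t : ℤ, ∃ P : ι → ℤ[X], f = C t * ∏ i, P i ∧ ∀ i, (P i).natDegree = (g i).natDegree := by
  choose P hP c hc hPc using fun i => exists_isPrimitive_map_eq_C_mul (hg i)
  have hprim : (∏ i, P i).IsPrimitive :=
    Finset.prod_induction _ _ (fun _ _ => IsPrimitive.mul) isPrimitive_one fun i _ => hP i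
  have hmap : (∏ i, P i).map (Int.castRingHom ℚ) = C (∏ i, c i) * f.map (Int.castRingHom ℚ) := by
    simp_rw [Polynomial.map_prod, hPc, Finset.prod_mul_distrib, map_prod, hfg]
  have hc0 : ∏ i, c i ≠ 0 := Finset.prod_ne_zero_iff.mpr fun i _ => hc i
  obtain ⟨H, hH⟩ : ∏ i, P i ∣ f := by
    refine (IsPrimitive.Int.dvd_iff_map_cast_dvd_map_cast _ _ hprim).mpr ⟨C (∏ i, c i)⁻¹, ?_⟩
    rw [hmap, mul_comm, ← mul_assoc, ← C_mul, inv_mul_cancel₀ hc0, C_1, one_mul]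
  have hf0 : f ≠ 0 := by
    rintro rfl
    exact Finset.prod_ne_zero_iff.mpr (fun i _ => hg i) (by rw [← hfg, Polynomial.map_zero])
  have hdegP : (∏ i, P i).natDegree = f.natDegree := by
    rw [← natDegree_map_eq_of_injective (RingHom.injective_int (Int.castRingHom ℚ)), hmap,
      natDegree_C_mul hc0, natDegree_map_eq_of_injective (RingHom.injective_int _)]
  have hH0 : H.natDegree = 0 := by
    have := congrArg natDegree hH
    rw [natDegree_mul (hH ▸ hf0 |> left_ne_zero_of_mul) (hH ▸ hf0 |> right_ne_zero_of_mul),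
      hdegP] at this
    omega
  refine ⟨H.coeff 0, P, ?_, fun i => ?_⟩
  · rw [hH, mul_comm, ← eq_C_of_natDegree_eq_zero hH0]
  · rw [← natDegree_map_eq_of_injective (RingHom.injective_int (Int.castRingHom ℚ)), hPc,
      natDegree_C_mul (hc i)]

lemma one_lt_natDegree_of_forall_aeval_ne_zero {G : ℤ[X]} (hG : 0 < G.natDegree)
    (h : ∀ x : ℚ, aeval x G ≠ 0) : 1 < G.natDegree := by
  by_contra hle
  have hdeg : (G.map (algebraMap ℤ ℚ)).degree = 1 := by
    rw [degree_map_eq_of_injective (RingHom.injective_int _), degree_eq_natDegree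
      (ne_zero_of_natDegree_gt hG)]
    exact_mod_cast (by omega : G.natDegree = 1)
  obtain ⟨x, hx⟩ := exists_root_of_degree_eq_one hdeg
  exact h x (by rwa [IsRoot, eval_map_algebraMap] at hx)

lemma mul_abs_eval_lt_abs_eval {G : ℤ[X]} (hG : 1 < G.natDegree) {q : ℝ} (hq : 1 ≤ q) {a b : ℤ}
    (ha : G.eval a ≠ 0) (h : ∀ θ : ℂ, aeval θ G = 0 → √q * ‖(a : ℂ) - θ‖ < ‖(b : ℂ) - θ‖) :
    q * |((G.eval a : ℤ) : ℝ)| < |((G.eval b : ℤ) : ℝ)| := by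
  set p := G.map (Int.castRingHom ℂ)
  have hdeg : p.natDegree = G.natDegree := natDegree_map_eq_of_injective (RingHom.injective_int _) G
  have heval (x : ℤ) : ‖p.eval (x : ℂ)‖ = |((G.eval x : ℤ) : ℝ)| := by
    rw [eval_intCast_map, eq_intCast, Complex.norm_intCast, Int.cast_id]
  have hpa : p.eval (a : ℂ) ≠ 0 := by rw [eval_intCast_map, eq_intCast]; exact_mod_cast ha
  have hlt := pow_mul_norm_eval_lt_norm_eval (by omega) (sqrt_pos.mpr (by linarith)) hpa
    (y := b) fun θ hθ => h θ <| by
      rw [aeval_def, eval₂_eq_eval_map, algebraMap_int_eq]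
      exact (mem_roots'.mp hθ).2
  rw [heval, heval, hdeg] at hlt
  have hq_le : q ≤ √q ^ G.natDegree := by
    calc q = √q ^ 2 := (sq_sqrt (by linarith)).symm
      _ ≤ √q ^ G.natDegree := pow_le_pow_right₀ (one_le_sqrt.mpr hq) hG
  exact lt_of_le_of_lt (mul_le_mul_of_nonneg_right hq_le (abs_nonneg _)) hlt

lemma AdmDiv.abs {f : ℤ[X]} {a d : ℤ} (h : AdmDiv f a d) : AdmDiv f a |d| := by
  rcases abs_choice d with hd | hd <;> rw [hd]
  · exact h
  · refine ⟨neg_dvd.mpr h.1, ?_⟩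
    rw [Int.ediv_neg, Int.gcd_neg, Int.neg_gcd]
    exact h.2

lemma admDiv_eval_of_dvd {f G : ℤ[X]} {a : ℤ} (hG : G ∣ f) (ha : f.eval a ≠ 0) :
    AdmDiv f a (G.eval a) := by
  obtain ⟨H, rfl⟩ := hG
  have hGa : G.eval a ≠ 0 := left_ne_zero_of_mul (by rwa [eval_mul] at ha)
  refine ⟨⟨H.eval a, eval_mul⟩, ?_⟩
  rw [eval_mul, Int.mul_ediv_cancel_left _ hGa]
  refine Int.natCast_dvd_natCast.mp (Int.dvd_coe_gcd ?_ ?_)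
  · exact (Int.gcd_dvd_left _ _).mul_right _
  · rw [derivative_mul, eval_add, eval_mul, eval_mul]
    exact dvd_add ((Int.gcd_dvd_right _ _).mul_left _) ((Int.gcd_dvd_left _ _).mul_right _)

theorem stmt4_general (f : Polynomial ℤ) (a b : ℤ) (k : ℕ)
    (q : ℝ) (hq : IsQk f a b k q) (hq1 : 1 < q)
    (hnorat : ∀ x : ℚ, aeval x f ≠ 0)
    (hroots : ∀ θ : ℂ, aeval θ f = 0 →
      Real.sqrt q * ‖(a : ℂ) - θ‖ < ‖(b : ℂ) - θ‖) :
    FactorsAtMost f k := by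
  intro g hg hfg
  have hf (x : ℤ) : f.eval x ≠ 0 := fun h => hnorat x (by simp [aeval_def, eval₂_eq_eval_map, h])
  obtain ⟨t, P, hfP, hdeg⟩ :=
    exists_eq_C_mul_prod_of_map_eq_prod (fun i => ne_zero_of_natDegree_gt (hg i)) hfg
  have hdvd (i : Fin (k + 1)) : P i ∣ f :=
    hfP ▸ (Finset.dvd_prod_of_mem P (Finset.mem_univ i)).mul_left _
  set r : Fin (k + 1) → ℝ := fun i => |(((P i).eval b : ℤ) : ℝ)| / |(((P i).eval a : ℤ) : ℝ)|
  have hprod : ∏ i, r i = |((f.eval b : ℤ) : ℝ)| / |((f.eval a : ℤ) : ℝ)| := by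
    have ht : (t : ℝ) ≠ 0 := by
      exact_mod_cast fun ht => hf a (by rw [hfP, ht, C_0, zero_mul, eval_zero])
    simp only [r, hfP, eval_mul, eval_C, eval_prod, Int.cast_mul, Int.cast_prod, abs_mul,
      Finset.abs_prod, Finset.prod_div_distrib, mul_div_mul_left _ _ (abs_ne_zero.mpr ht)]
  obtain ⟨j, -, hj⟩ := Finset.univ.exists_le_prod_rpow_inv_card Finset.univ_nonempty
    (r := r) fun i _ => by positivity
  have hj_le : r j ≤ q := hq.2
    ⟨_, _, (admDiv_eval_of_dvd (hdvd j) (hf a)).abs, (admDiv_eval_of_dvd (hdvd j) (hf b)).abs,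
      by simp [r], by simpa [hprod] using hj⟩
  have hj_deg : 1 < (P j).natDegree :=
    one_lt_natDegree_of_forall_aeval_ne_zero (hdeg j ▸ hg j) fun x hx =>
      hnorat x (aeval_eq_zero_of_dvd_aeval_eq_zero (hdvd j) hx)
  have hPa : (P j).eval a ≠ 0 := fun h => hf a (eval_eq_zero_of_dvd_of_eval_eq_zero (hdvd j) h)
  have hlt := mul_abs_eval_lt_abs_eval hj_deg hq1.le hPa fun θ hθ =>
    hroots θ (aeval_eq_zero_of_dvd_aeval_eq_zero (hdvd j) hθ)
  exact hj_le.not_gt ((lt_div_iff₀ (by positivity)).mpr hlt)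

theorem stmt4 (f : Polynomial ℤ) (a b : ℤ) (k : ℕ) (hk : 1 ≤ k)
    (ha : f.eval a ≠ 0) (hab : |f.eval a| < |f.eval b|)
    (q : ℝ) (hq : IsQk f a b k q) (hq1 : 1 < q)
    (hnorat : ∀ x : ℚ, aeval x f ≠ 0)
    (hroots : ∀ θ : ℂ, aeval θ f = 0 →
      Real.sqrt q * ‖(a : ℂ) - θ‖ < ‖(b : ℂ) - θ‖) :
    FactorsAtMost f k :=
  stmt4_general f a b k q hq hq1 hnorat hroots
end
end

section
/- Let f(X) = a₀ + a₁X + ⋯ + a_nXⁿ ∈ ℤ[X] with a₀ ≠ 0 and |a_n| > 2|a_{n−1}| + 2²|a_{n−2}| + ⋯ + 2ⁿ|a₀|. If there exists a nonzero integer b and a prime p > |a₀| with |f(b)| = p^k for some k ≥ 1, then f is a product of at most 1 + ⌊(k − 1)·log p / log(p/|a₀|)⌋ irreducible factors over ℚ. -/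
/-!
Since `|a_n| > ∑ 2^(n-i) |a_i|`, every complex root `θ` of `f` has `|θ| < 1/2`. For a nonconstant
integer factor `Q` of `f` and an integer `b ≠ 0` this gives `|b - θ| ≥ 1 - |θ| > |θ|` root by
root, so `|Q(b)| > |Q(0)| ≥ 1`, where `Q(0) ≠ 0` because it divides `a₀`. By Gauss's lemma a
factorisation of `f` over `ℚ` into `m` nonconstant factors yields `m` integer factors of `f`, whose
values at `b` are divisors of `p^k` of absolute value at least `2`; hence `m ≤ k`. Finally
`log p / log (p / |a₀|) ≥ 1`, so `k ≤ 1 + ⌊(k - 1) log p / log (p / |a₀|)⌋`.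
-/

open Polynomial Real

noncomputable section

theorem Polynomial.norm_lt_half_of_isRoot {K : Type*} [NormedField K] {f : K[X]}
    (hf : ∑ i ∈ Finset.range f.natDegree, 2 ^ (f.natDegree - i) * ‖f.coeff i‖ < ‖f.leadingCoeff‖)
    {z : K} (hz : f.IsRoot z) : ‖z‖ < 1 / 2 := by
  by_contra! hz2
  set n := f.natDegree
  have hpow : ∀ i ∈ Finset.range n, ‖z‖ ^ i ≤ 2 ^ (n - i) * ‖z‖ ^ n := by
    intro i hi
    calc ‖z‖ ^ i = 2 ^ (n - i) * ((1 / 2) ^ (n - i) * ‖z‖ ^ i) := by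
          rw [← mul_assoc, ← mul_pow]; norm_num
      _ ≤ 2 ^ (n - i) * (‖z‖ ^ (n - i) * ‖z‖ ^ i) := by gcongr
      _ = 2 ^ (n - i) * ‖z‖ ^ n := by
          rw [← pow_add, Nat.sub_add_cancel (Finset.mem_range.mp hi).le]
  have hlead : f.leadingCoeff * z ^ n = -∑ i ∈ Finset.range n, f.coeff i * z ^ i := by
    have := hz.eq_zero
    rw [eval_eq_sum_range, Finset.sum_range_succ] at this
    exact eq_neg_of_add_eq_zero_right this
  have hbound : ‖f.leadingCoeff‖ * ‖z‖ ^ n ≤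
      (∑ i ∈ Finset.range n, 2 ^ (n - i) * ‖f.coeff i‖) * ‖z‖ ^ n :=
    calc ‖f.leadingCoeff‖ * ‖z‖ ^ n = ‖∑ i ∈ Finset.range n, f.coeff i * z ^ i‖ := by
          rw [← norm_pow, ← norm_mul, hlead, norm_neg]
      _ ≤ ∑ i ∈ Finset.range n, ‖f.coeff i‖ * ‖z‖ ^ i := by
          simpa only [norm_mul, norm_pow] using
            norm_sum_le (Finset.range n) fun i => f.coeff i * z ^ i
      _ ≤ ∑ i ∈ Finset.range n, ‖f.coeff i‖ * (2 ^ (n - i) * ‖z‖ ^ n) := by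
          gcongr with i hi; exact hpow i hi
      _ = _ := by rw [Finset.sum_mul]; congr! 1 with i; ring
  have hzn : 0 < ‖z‖ ^ n := pow_pos (by linarith) n
  linarith [(mul_le_mul_iff_left₀ hzn).mp hbound]

theorem Polynomial.Splits.norm_eval_zero_lt_norm_eval {K : Type*} [NormedField K] {Q : K[X]}
    (hQ : Q.Splits) (hdeg : 0 < Q.natDegree) (h0 : Q.eval 0 ≠ 0)
    (hroots : ∀ a ∈ Q.roots, ‖a‖ < 1 / 2) {w : K} (hw : 1 ≤ ‖w‖) :
    ‖Q.eval 0‖ < ‖Q.eval w‖ := by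
  have hlc : 0 < ‖Q.leadingCoeff‖ :=
    norm_pos_iff.mpr (leadingCoeff_ne_zero.mpr (ne_zero_of_natDegree_gt hdeg))
  have hroot0 : ∀ a ∈ Q.roots, a ≠ 0 := fun a ha h => h0 (by subst h; exact (mem_roots'.mp ha).2)
  have hnorm (x : K) :
      ‖(Q.roots.map (x - ·)).prod‖ = (Q.roots.map fun a => ‖x - a‖).prod := by
    simpa [Multiset.map_map] using map_multiset_prod (normHom : K →*₀ ℝ) (Q.roots.map (x - ·))
  rw [hQ.eval_eq_prod_roots, hQ.eval_eq_prod_roots, norm_mul, norm_mul, hnorm, hnorm]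
  refine mul_lt_mul_of_pos_left (Multiset.prod_map_lt_prod_map
    (hQ.roots_ne_zero hdeg.ne') _ _ (fun a ha => ?_) (fun a ha => ?_)) hlc
  · simpa using hroot0 a ha
  · have := hroots a ha
    have := norm_sub_norm_le w a
    simp only [zero_sub, norm_neg]
    linarith

theorem Polynomial.abs_eval_zero_lt_abs_eval_of_dvd {f Q : ℤ[X]}
    (hf : ∑ i ∈ Finset.range f.natDegree, 2 ^ (f.natDegree - i) * |f.coeff i| < |f.leadingCoeff|)
    (hQ : Q ∣ f) (hdeg : 0 < Q.natDegree) (h0 : Q.eval 0 ≠ 0) {b : ℤ} (hb : b ≠ 0) :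
    |Q.eval 0| < |Q.eval b| := by
  have hinj : Function.Injective (Int.castRingHom ℂ) := Int.cast_injective
  set fC := f.map (Int.castRingHom ℂ)
  set QC := Q.map (Int.castRingHom ℂ)
  have hfC : ∑ i ∈ Finset.range fC.natDegree, 2 ^ (fC.natDegree - i) * ‖fC.coeff i‖ <
      ‖fC.leadingCoeff‖ := by
    simp only [fC, natDegree_map_eq_of_injective hinj, leadingCoeff_map_of_injective hinj,
      coeff_map, eq_intCast, Complex.norm_intCast]
    exact_mod_cast hf
  have hroots : ∀ a ∈ QC.roots, ‖a‖ < 1 / 2 := fun a ha =>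
    norm_lt_half_of_isRoot hfC ((mem_roots'.mp ha).2.dvd (map_dvd _ hQ))
  have hcast (x : ℤ) : QC.eval (x : ℂ) = ((Q.eval x : ℤ) : ℂ) := eval_intCast_map _ _ _
  have key := (IsAlgClosed.splits QC).norm_eval_zero_lt_norm_eval
    (by rwa [natDegree_map_eq_of_injective hinj])
    (by rw [← Int.cast_zero, hcast]; exact_mod_cast h0)
    hroots (w := b) (by rw [Complex.norm_intCast]; exact_mod_cast Int.one_le_abs hb)
  rw [← Int.cast_zero, hcast, hcast, Complex.norm_intCast, Complex.norm_intCast] at key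
  exact_mod_cast key

theorem Polynomial.one_lt_natAbs_eval_of_dvd {f Q : ℤ[X]} (hf0 : f.coeff 0 ≠ 0)
    (hf : ∑ i ∈ Finset.range f.natDegree, 2 ^ (f.natDegree - i) * |f.coeff i| < |f.leadingCoeff|)
    (hQ : Q ∣ f) (hdeg : 0 < Q.natDegree) {b : ℤ} (hb : b ≠ 0) : 1 < (Q.eval b).natAbs := by
  have h0 : Q.eval 0 ≠ 0 := fun h => hf0 (by
    simpa [h, coeff_zero_eq_eval_zero] using eval_dvd (x := 0) hQ)
  have hlt := abs_eval_zero_lt_abs_eval_of_dvd hf hQ hdeg h0 hb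
  rw [Int.abs_eq_natAbs, Int.abs_eq_natAbs] at hlt
  have := Int.natAbs_pos.mpr h0
  omega

section GaussLemma

variable {R K : Type*} [CommRing R] [IsDomain R] [NormalizedGCDMonoid R] [Field K] [Algebra R K]
  [IsFractionRing R K]

theorem Polynomial.exists_isPrimitive_map_eq_C_mul {g : K[X]} (hg : g ≠ 0) :
    ∃ (Q : R[X]) (c : K), c ≠ 0 ∧ Q.IsPrimitive ∧ Q.map (algebraMap R K) = C c * g := by
  obtain ⟨b, hb, hN⟩ := IsLocalization.integerNormalization_spec (nonZeroDivisors R) g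
  set N := IsLocalization.integerNormalization (nonZeroDivisors R) g
  have hN0 : N ≠ 0 := fun h => hg (IsFractionRing.integerNormalization_eq_zero_iff.mp h)
  have hcont : algebraMap R K N.content ≠ 0 :=
    (map_ne_zero_iff _ (IsFractionRing.injective R K)).mpr (content_eq_zero_iff.not.mpr hN0)
  have hb0 : algebraMap R K b ≠ 0 :=
    (map_ne_zero_iff _ (IsFractionRing.injective R K)).mpr (nonZeroDivisors.ne_zero hb)
  refine ⟨N.primPart, algebraMap R K b / algebraMap R K N.content, div_ne_zero hb0 hcont,
    N.isPrimitive_primPart, ?_⟩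
  have hsplit : N.map (algebraMap R K) =
      C (algebraMap R K N.content) * N.primPart.map (algebraMap R K) := by
    conv_lhs => rw [N.eq_C_content_mul_primPart]
    rw [Polynomial.map_mul, map_C]
  rw [hsplit, Algebra.smul_def, algebraMap_apply] at hN
  rw [div_eq_inv_mul, C_mul, mul_assoc, ← hN, ← mul_assoc, ← C_mul, inv_mul_cancel₀ hcont, C_1,
    one_mul]

theorem Polynomial.exists_prod_dvd_of_map_eq_prod {ι : Type*} [Fintype ι] {f : R[X]}
    {g : ι → K[X]} (hg : ∀ i, 0 < (g i).natDegree) (hf : f.map (algebraMap R K) = ∏ i, g i) :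
    ∃ Q : ι → R[X], (∀ i, 0 < (Q i).natDegree) ∧ ∏ i, Q i ∣ f := by
  choose Q c hc hprim hQ using fun i =>
    exists_isPrimitive_map_eq_C_mul (R := R) (ne_zero_of_natDegree_gt (hg i))
  refine ⟨Q, fun i => ?_, ?_⟩
  · rw [← natDegree_map_eq_of_injective (IsFractionRing.injective R K), hQ i,
      natDegree_C_mul (hc i)]
    exact hg i
  · have hprod : (∏ i, Q i).IsPrimitive :=
      Finset.prod_induction _ IsPrimitive (fun _ _ => IsPrimitive.mul) isPrimitive_one
        fun i _ => hprim i
    refine hprod.dvd_of_fraction_map_dvd_fraction_map (K := K) ?_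
    rw [Polynomial.map_prod, hf]
    exact Finset.prod_dvd_prod_of_dvd _ _ fun i _ => by
      rw [hQ i, (isUnit_C.mpr (hc i).isUnit).mul_left_dvd]

end GaussLemma

open ArithmeticFunction ArithmeticFunction.Omega in
theorem Finset.card_le_cardFactors_of_prod_dvd {ι : Type*} {s : Finset ι} {x : ι → ℕ} {n : ℕ}
    (hn : n ≠ 0) (hx : ∀ i ∈ s, 1 < x i) (h : ∏ i ∈ s, x i ∣ n) : s.card ≤ Ω n := by
  have hprod : Ω (∏ i ∈ s, x i) = ∑ i ∈ s, Ω (x i) := by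
    rw [Finset.prod_eq_multiset_prod, cardFactors_multiset_prod, Multiset.map_map,
      Finset.sum_eq_multiset_sum]
    · rfl
    · rw [← Finset.prod_eq_multiset_prod]; exact ne_zero_of_dvd_ne_zero hn h
  calc s.card = ∑ i ∈ s, 1 := by simp
    _ ≤ ∑ i ∈ s, Ω (x i) := Finset.sum_le_sum fun i hi => cardFactors_pos_iff_one_lt.mpr (hx i hi)
    _ = Ω (∏ i ∈ s, x i) := hprod.symm
    _ ≤ Ω n := by
      simpa only [cardFactors_apply] using (Nat.primeFactorsList_sublist_of_dvd h hn).length_le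

theorem Real.one_le_logb_div {a p : ℝ} (ha : 1 ≤ a) (hap : a < p) : 1 ≤ logb (p / a) p := by
  have hbase : 1 < p / a := (one_lt_div (by linarith)).mpr hap
  rw [logb, le_div_iff₀ (log_pos hbase), one_mul]
  exact log_le_log (by positivity) (div_le_self (by linarith) ha)

theorem le_one_add_toNat_floor_sub_one_mul {L : ℝ} (hL : 1 ≤ L) (k : ℕ) :
    k ≤ 1 + ⌊((k : ℝ) - 1) * L⌋.toNat := by
  rcases Nat.eq_zero_or_pos k with rfl | hk
  · omega
  have : ((k : ℤ) - 1) ≤ ⌊((k : ℝ) - 1) * L⌋ := by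
    rw [Int.le_floor]
    push_cast
    have : (1 : ℝ) ≤ k := by exact_mod_cast hk
    nlinarith
  omega

theorem stmt9_general (f : Polynomial ℤ) (ha0 : f.coeff 0 ≠ 0)
    (hlead : |f.leadingCoeff| >
      ∑ i ∈ Finset.range f.natDegree, 2 ^ (f.natDegree - i) * |f.coeff i|)
    (b : ℤ) (hb : b ≠ 0) (p : ℕ) (hp : p.Prime) (hpa0 : (p : ℤ) > |f.coeff 0|)
    (k : ℕ) (hfb : (f.eval b).natAbs = p ^ k) :
    FactorsAtMost f
      (1 + (⌊((k : ℝ) - 1) * Real.logb ((p : ℝ) / (|f.coeff 0| : ℝ)) (p : ℝ)⌋).toNat) := by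
  intro g hg hprod
  rw [← algebraMap_int_eq] at hprod
  obtain ⟨Q, hQdeg, hQf⟩ := exists_prod_dvd_of_map_eq_prod hg hprod
  have hQb (i) : 1 < ((Q i).eval b).natAbs := one_lt_natAbs_eval_of_dvd ha0 hlead
    ((Finset.dvd_prod_of_mem Q (Finset.mem_univ i)).trans hQf) (hQdeg i) hb
  have hdvd : ∏ i, ((Q i).eval b).natAbs ∣ p ^ k :=
    calc ∏ i, ((Q i).eval b).natAbs = ((∏ i, Q i).eval b).natAbs := by
          rw [eval_prod]; exact (map_prod Int.natAbsHom _ _).symm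
      _ ∣ p ^ k := hfb ▸ Int.natAbs_dvd_natAbs.mpr (eval_dvd hQf)
  have hcard := Finset.card_le_cardFactors_of_prod_dvd (pow_ne_zero k hp.ne_zero)
    (fun i _ => hQb i) hdvd
  rw [Finset.card_univ, Fintype.card_fin, ArithmeticFunction.cardFactors_apply_prime_pow hp]
    at hcard
  have ha1 : (1 : ℝ) ≤ |(f.coeff 0 : ℝ)| := by exact_mod_cast Int.one_le_abs ha0
  have hap : |(f.coeff 0 : ℝ)| < p := by exact_mod_cast hpa0
  have := le_one_add_toNat_floor_sub_one_mul (one_le_logb_div ha1 hap) k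
  omega

theorem stmt9 (f : Polynomial ℤ) (ha0 : f.coeff 0 ≠ 0)
    (hlead : |f.leadingCoeff| >
      ∑ i ∈ Finset.range f.natDegree, 2 ^ (f.natDegree - i) * |f.coeff i|)
    (b : ℤ) (hb : b ≠ 0) (p : ℕ) (hp : p.Prime) (hpa0 : (p : ℤ) > |f.coeff 0|)
    (k : ℕ) (hk : 1 ≤ k) (hfb : (f.eval b).natAbs = p ^ k) :
    FactorsAtMost f
      (1 + (⌊((k : ℝ) - 1) * Real.logb ((p : ℝ) / (|f.coeff 0| : ℝ)) (p : ℝ)⌋).toNat) :=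
  stmt9_general f ha0 hlead b hb p hp hpa0 k hfb
end
end
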